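/- arXiv:2001.05191 — 8 statements merged into one kernel-verified Lean document; each statement's English description precedes it below -/
import Mathlib

section
/- Let $G$ be an alternating directed graph on vertex set $[n]$ with at least one edge, whose underlying undirected graph has $r$ connected components. Then the polytope $Q_G = \mathrm{conv}\{\mathbf e_i - \mathbf e_j : (i,j) \in E(G)\} \subset \mathbb R^n$ has dimension $n - r - 1$. -/
/-- The vector `e_i - e_j` associated to the directed edge `e = (i, j)`. -/
def vecOf (n : ℕ) (e : Fin n × Fin n) : Fin n → ℝ :=
  fun k => (if k = e.1 then 1 else 0) - (if k = e.2 then 1 else 0)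

/-- The root polytope `Q_G = conv{e_i - e_j : (i,j) ∈ E(G)}`. -/
def Qp (n : ℕ) (E : Set (Fin n × Fin n)) : Set (Fin n → ℝ) :=
  convexHull ℝ (vecOf n '' E)

/-- The underlying undirected (simple) graph of a directed graph given by its edge set. -/
def underlying {n : ℕ} (E : Set (Fin n × Fin n)) : SimpleGraph (Fin n) where
  Adj u v := u ≠ v ∧ ((u, v) ∈ E ∨ (v, u) ∈ E)
  symm := ⟨fun _ _ h => ⟨h.1.symm, h.2.symm⟩⟩
  loopless := ⟨fun _ h => h.1 rfl⟩

/-!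
The vectors `e_i - e_j` span a space of dimension `n - r`: its annihilator consists of the
functionals `x ↦ ∑ i, g [i] * x i` with `g` a function on the connected components `[i]`.
Since `G` is alternating, the functional summing the coordinates at the sources of `G` equals `1`
on every `e_i - e_j`, so these vectors lie in an affine hyperplane missing the origin, and their
affine hull has dimension one less than their linear span.
-/

open Module Submodule

lemma SimpleGraph.Reachable.eq_of_forall_adj {V β : Type*} {G : SimpleGraph V} {f : V → β}
    (hf : ∀ u v, G.Adj u v → f u = f v) {u v : V} (h : G.Reachable u v) : f u = f v := by
  obtain ⟨p⟩ := h
  induction p with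
  | nil => rfl
  | cons hadj _ ih => exact (hf _ _ hadj).trans ih

lemma finrank_vectorSpan_add_one_of_forall_eq_one {K V : Type*} [Field K] [AddCommGroup V]
    [Module K V] [FiniteDimensional K V] {s : Set V} (hs : s.Nonempty) {f : Dual K V}
    (hf : ∀ v ∈ s, f v = 1) : finrank K (vectorSpan K s) + 1 = finrank K (span K s) := by
  obtain ⟨p, hp⟩ := hs
  -- `span K s` is the vector span of `insert 0 s`.
  have hspan : span K s = vectorSpan K s ⊔ span K {0 -ᵥ p} := by
    rw [sup_comm, ← direction_affineSpan,
      ← AffineSubspace.direction_affineSpan_insert (mem_affineSpan K hp),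
      affineSpan_insert_affineSpan, direction_affineSpan,
      vectorSpan_eq_span_vsub_set_right K (Set.mem_insert 0 s)]
    simp
  have hp_notMem : 0 -ᵥ p ∉ vectorSpan K s := by
    intro h
    have hker : vectorSpan K s ≤ LinearMap.ker f := by
      rw [vectorSpan_def, span_le]
      rintro _ ⟨a, ha, b, hb, rfl⟩
      simp [hf a ha, hf b hb]
    simpa [hf p hp] using hker h
  rw [hspan, finrank_sup_span_singleton hp_notMem]

section RootSpan

variable {n : ℕ}

lemma vecOf_eq_single_sub_single (e : Fin n × Fin n) :
    vecOf n e = Pi.single e.1 1 - Pi.single e.2 1 := by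
  ext k
  simp [vecOf, Pi.single_apply]

lemma Pi.basisFun_toDual_apply_single {R ι : Type*} [CommRing R] [Fintype ι] [DecidableEq ι]
    (c : ι → R) (k : ι) : (Pi.basisFun R ι).toDual c (Pi.single k 1) = c k := by
  simpa using (Pi.basisFun R ι).toDual_apply_left c k

lemma mem_dualAnnihilator_span_vecOf_iff {E : Set (Fin n × Fin n)}
    {φ : Dual ℝ (Fin n → ℝ)} :
    φ ∈ (span ℝ (vecOf n '' E)).dualAnnihilator ↔
      ∀ e ∈ E, φ (Pi.single e.1 1) = φ (Pi.single e.2 1) := by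
  rw [← SetLike.mem_coe, coe_dualAnnihilator_span, Set.mem_ofPred_eq, Set.image_subset_iff]
  simp [Set.subset_def, vecOf_eq_single_sub_single, sub_eq_zero]

variable (E : Set (Fin n × Fin n))

noncomputable def componentDual :
    ((underlying E).ConnectedComponent → ℝ) →ₗ[ℝ] Dual ℝ (Fin n → ℝ) :=
  (Pi.basisFun ℝ (Fin n)).toDual ∘ₗ
    LinearMap.funLeft ℝ ℝ (underlying E).connectedComponentMk

lemma componentDual_apply_single (g : (underlying E).ConnectedComponent → ℝ) (k : Fin n) :
    componentDual E g (Pi.single k 1) = g ((underlying E).connectedComponentMk k) :=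
  Pi.basisFun_toDual_apply_single _ k

lemma componentDual_injective : Function.Injective (componentDual E) :=
  (Pi.basisFun ℝ (Fin n)).toDual_injective.comp
    (LinearMap.funLeft_injective_of_surjective _ _ _ Quot.mk_surjective)

lemma range_componentDual :
    LinearMap.range (componentDual E) = (span ℝ (vecOf n '' E)).dualAnnihilator := by
  ext φ
  rw [mem_dualAnnihilator_span_vecOf_iff]
  constructor
  · rintro ⟨g, rfl⟩ ⟨i, j⟩ he
    simp only [componentDual_apply_single]
    by_cases hij : i = j
    · rw [hij]
    · exact congrArg g
        (SimpleGraph.ConnectedComponent.connectedComponentMk_eq_of_adj ⟨hij, Or.inl he⟩)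
  · intro hφ
    have hadj : ∀ u v, (underlying E).Adj u v → φ (Pi.single u 1) = φ (Pi.single v 1) := by
      rintro u v ⟨-, huv | hvu⟩
      exacts [hφ _ huv, (hφ _ hvu).symm]
    refine ⟨SimpleGraph.ConnectedComponent.lift (fun i => φ (Pi.single i 1))
      fun u v p _ => p.reachable.eq_of_forall_adj hadj, (Pi.basisFun ℝ (Fin n)).ext fun k => ?_⟩
    simp [componentDual_apply_single]

lemma finrank_span_vecOf :
    finrank ℝ (span ℝ (vecOf n '' E)) = n - Nat.card (underlying E).ConnectedComponent := by
  have := Fintype.ofFinite (underlying E).ConnectedComponent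
  have h := Subspace.finrank_add_finrank_dualAnnihilator_eq (span ℝ (vecOf n '' E))
  rw [← range_componentDual, LinearMap.finrank_range_of_inj (componentDual_injective E),
    finrank_fintype_fun_eq_card, finrank_fin_fun] at h
  rw [Nat.card_eq_fintype_card]
  omega

end RootSpan

lemma exists_dual_eq_one_on_vecOf {n : ℕ} {E : Set (Fin n × Fin n)}
    (halt : ∀ i j k : Fin n, (i, j) ∈ E → (j, k) ∈ E → False) :
    ∃ f : Dual ℝ (Fin n → ℝ), ∀ v ∈ vecOf n '' E, f v = 1 := by
  classical
  refine ⟨(Pi.basisFun ℝ (Fin n)).toDual fun i => if ∃ j, (i, j) ∈ E then 1 else 0, ?_⟩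
  rintro _ ⟨⟨i, j⟩, he, rfl⟩
  have hj : ¬∃ k, (j, k) ∈ E := fun ⟨k, hk⟩ => halt i j k he hk
  have hi : ∃ k, (i, k) ∈ E := ⟨j, he⟩
  simp [vecOf_eq_single_sub_single, Pi.basisFun_toDual_apply_single, hi, hj]

theorem stmt2 (n r : ℕ) (E : Set (Fin n × Fin n))
    (halt : ∀ i j k : Fin n, (i, j) ∈ E → (j, k) ∈ E → False)
    (hne : E.Nonempty)
    (hr : Nat.card (underlying E).ConnectedComponent = r) :
    Module.finrank ℝ (affineSpan ℝ (Qp n E)).direction = n - r - 1 := by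
  obtain ⟨f, hf⟩ := exists_dual_eq_one_on_vecOf halt
  have hdim := finrank_vectorSpan_add_one_of_forall_eq_one (hne.image (vecOf n)) hf
  rw [Qp, affineSpan_convexHull, direction_affineSpan]
  rw [finrank_span_vecOf, hr] at hdim
  omega
end

section
/- Let $H \subseteq G$ be a subgraph of a directed acyclic graph $G$ on $[n]$, and let $c_1,\dots,c_n, c \in \mathbb R$. The hyperplane $S = \{\mathbf x : \sum_i c_i x_i = c\}$ is a supporting hyperplane of $\tilde Q_G$ with $\tilde Q_G \cap S = \tilde Q_H$ if and only if: (a) $c = 0$; (b) $c_i \geq c_j$ for all $(i,j) \in E(G)$; (c) for every $(i,j) \in E(G)$, $c_i = c_j$ holds if and only if $(i,j) \in E(H)$. -/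
/-- The root polytope `tilde Q_G = conv{0, e_i - e_j : (i,j) ∈ E(G)}`. -/
def tQ (n : ℕ) (E : Set (Fin n × Fin n)) : Set (Fin n → ℝ) :=
  convexHull ℝ ({0} ∪ vecOf n '' E)

lemma dot_vecOf (n : ℕ) (c : Fin n → ℝ) (e : Fin n × Fin n) :
    ∑ i, c i * vecOf n e i = c e.1 - c e.2 := by
  unfold vecOf
  simp [mul_sub, mul_ite, mul_one, mul_zero, Finset.sum_sub_distrib, Finset.sum_ite_eq']

lemma isLin (n : ℕ) (c : Fin n → ℝ) :
    IsLinearMap ℝ (fun x : Fin n → ℝ => ∑ i, c i * x i) := by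
  constructor
  · intro x y
    simp [mul_add, Finset.sum_add_distrib]
  · intro s x
    simp only [Pi.smul_apply, smul_eq_mul, Finset.mul_sum]
    exact Finset.sum_congr rfl fun i _ => by ring

lemma zero_mem_tQ (n : ℕ) (E : Set (Fin n × Fin n)) : (0 : Fin n → ℝ) ∈ tQ n E :=
  subset_convexHull ℝ _ (Or.inl rfl)

lemma vec_mem_tQ (n : ℕ) (E : Set (Fin n × Fin n)) {e : Fin n × Fin n} (he : e ∈ E) :
    vecOf n e ∈ tQ n E :=
  subset_convexHull ℝ _ (Or.inr ⟨e, he, rfl⟩)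

lemma extreme_vec (n : ℕ) (EH : Set (Fin n × Fin n)) (e : Fin n × Fin n)
    (hne : e.1 ≠ e.2) (h : vecOf n e ∈ tQ n EH) : e ∈ EH := by
  by_contra hcon
  have hsub : tQ n EH ⊆ {x | ∑ i, vecOf n e i * x i ≤ 1} := by
    apply convexHull_min _ (convex_halfSpace_le (isLin n (vecOf n e)) 1)
    rintro x (rfl | ⟨e', he', rfl⟩)
    · simp
    · rw [Set.mem_setOf_eq, dot_vecOf]
      have hne' : e' ≠ e := fun hh => hcon (hh ▸ he')
      have : ¬ (e'.1 = e.1 ∧ e'.2 = e.2) := by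
        intro ⟨h1, h2⟩; exact hne' (Prod.ext h1 h2)
      unfold vecOf
      split_ifs <;> simp_all <;> norm_num
  have h2 : ∑ i, vecOf n e i * vecOf n e i = 2 := by
    rw [dot_vecOf]
    unfold vecOf
    simp [hne, hne.symm]
    norm_num
  have := hsub h
  rw [Set.mem_setOf_eq, h2] at this
  linarith

lemma face_sub (n : ℕ) (E EH : Set (Fin n × Fin n)) (c : Fin n → ℝ)
    (h0 : ∀ e ∈ E, c e.2 ≤ c e.1)
    (h1 : ∀ e ∈ E, c e.1 = c e.2 → e ∈ EH)
    (x : Fin n → ℝ) (hx : x ∈ tQ n E) (hfx : ∑ i, c i * x i = 0) :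
    x ∈ tQ n EH := by
  rw [tQ, convexHull_eq] at hx
  obtain ⟨ι, t, w, z, hw0, hw1, hz, hxc⟩ := hx
  set L := (isLin n c).mk' _ with hL
  have hLz : ∀ i ∈ t, 0 ≤ L (z i) := by
    intro i hi
    rcases hz i hi with h | ⟨e, he, h⟩
    · simp only [Set.mem_singleton_iff] at h
      simp [hL, IsLinearMap.mk'_apply, h]
    · rw [hL, IsLinearMap.mk'_apply, ← h, dot_vecOf]
      linarith [h0 e he]
  have hxe : x = ∑ i ∈ t, w i • z i := by
    rw [← hxc, Finset.centerMass_eq_of_sum_1 _ _ hw1]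
  have hsum : ∑ i ∈ t, w i * L (z i) = 0 := by
    have hLx : L x = 0 := hfx
    rw [hxe] at hLx
    simp only [map_sum, map_smul, smul_eq_mul] at hLx
    exact hLx
  have hzero : ∀ i ∈ t, w i * L (z i) = 0 :=
    (Finset.sum_eq_zero_iff_of_nonneg
      (fun i hi => mul_nonneg (hw0 i hi) (hLz i hi))).mp hsum
  rw [tQ]
  rw [← hxc, ← Finset.centerMass_filter_ne_zero]
  apply Finset.centerMass_mem_convexHull
  · intro i hi
    exact hw0 i (Finset.mem_filter.mp hi).1
  · rw [Finset.sum_filter_ne_zero, hw1]; norm_num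
  · intro i hi
    obtain ⟨hit, hiw⟩ := Finset.mem_filter.mp hi
    have hLzi : L (z i) = 0 := by
      have := hzero i hit
      rcases mul_eq_zero.mp this with h | h
      · exact absurd h hiw
      · exact h
    rcases hz i hit with h | ⟨e, he, h⟩
    · exact Or.inl h
    · right
      refine ⟨e, h1 e he ?_, h⟩
      rw [hL, IsLinearMap.mk'_apply, ← h, dot_vecOf] at hLzi
      linarith

lemma tQ_mono (n : ℕ) {E EH : Set (Fin n × Fin n)} (hH : EH ⊆ E) : tQ n EH ⊆ tQ n E :=
  convexHull_mono (Set.union_subset_union_right _ (Set.image_mono hH))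

/-- The hyperplane `{x : ∑ cᵢxᵢ = a}` is a supporting hyperplane of `tilde Q_G` cutting out
the face `tilde Q_H` iff (a) `a = 0`, (b) `cᵢ ≥ c_j` for all edges `(i,j)` of `G`, and
(c) for edges `(i,j)` of `G`, `cᵢ = c_j` iff `(i,j)` is an edge of `H`. -/
theorem stmt4 (n : ℕ) (E EH : Set (Fin n × Fin n))
    (hE : ∀ e ∈ E, e.1 < e.2) (hH : EH ⊆ E)
    (c : Fin n → ℝ) (a : ℝ) :
    ((∀ x ∈ tQ n E, a ≤ ∑ i, c i * x i) ∧
      {x ∈ tQ n E | ∑ i, c i * x i = a} = tQ n EH)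
    ↔ (a = 0 ∧ (∀ e ∈ E, c e.2 ≤ c e.1) ∧
        (∀ e ∈ E, c e.1 = c e.2 ↔ e ∈ EH)) := by
  constructor
  · rintro ⟨hsupp, hface⟩
    have h0 : (0 : Fin n → ℝ) ∈ {x ∈ tQ n E | ∑ i, c i * x i = a} := by
      rw [hface]; exact zero_mem_tQ n EH
    have ha : a = 0 := by
      have := h0.2
      simpa using this.symm
    refine ⟨ha, ?_, ?_⟩
    · intro e he
      have := hsupp _ (vec_mem_tQ n E he)
      rw [dot_vecOf, ha] at this
      linarith
    · intro e he
      constructor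
      · intro hc
        have hmem : vecOf n e ∈ {x ∈ tQ n E | ∑ i, c i * x i = a} := by
          refine ⟨vec_mem_tQ n E he, ?_⟩
          rw [dot_vecOf, hc, ha]; ring
        rw [hface] at hmem
        exact extreme_vec n EH e (hE e he).ne hmem
      · intro heH
        have hmem : vecOf n e ∈ tQ n EH := vec_mem_tQ n EH heH
        rw [← hface] at hmem
        have := hmem.2
        rw [dot_vecOf, ha] at this
        linarith
  · rintro ⟨ha, hmono, hiff⟩
    subst ha
    constructor
    · apply convexHull_min _ (convex_halfSpace_ge (isLin n c) 0)
      rintro x (rfl | ⟨e, he, rfl⟩)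
      · simp
      · rw [Set.mem_setOf_eq, dot_vecOf]
        linarith [hmono e he]
    · apply Set.Subset.antisymm
      · rintro x ⟨hx, hfx⟩
        exact face_sub n E EH c hmono (fun e he hc => (hiff e he).mp hc) x hx hfx
      · intro x hx
        refine ⟨tQ_mono n hH hx, ?_⟩
        revert x
        apply convexHull_min _ (convex_hyperplane (isLin n c) 0)
        rintro x (rfl | ⟨e, he, rfl⟩)
        · simp
        · rw [Set.mem_setOf_eq, dot_vecOf]
          have := (hiff e (hH he)).mpr he
          linarith
end

section
/- Let $H \subseteq G$ be a subgraph of a directed acyclic graph $G$ on $[n]$, and let $c_1,\dots,c_n, c \in \mathbb R$. The hyperplane $S = \{\mathbf x : \sum_i c_i x_i = c\}$ is a supporting hyperplane of $\tilde Q_G$ with $\tilde Q_G \cap S = Q_H$ (the face not containing the origin) if and only if: (a) $c < 0$; (b) $c_i \geq c_j + c$ for all $(i,j) \in E(G)$; (c) for every $(i,j) \in E(G)$, $c_i = c_j + c$ holds if and only if $(i,j) \in E(H)$. -/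
/-! If `a ≤ L` on a set `s` for a linear functional `L`, the face `{L = a}` of `conv s` is the
convex hull of the points of `s` on the hyperplane. With `s = {0} ∪ {e_i - e_j}` and
`L x = ∑ cᵢ xᵢ`, which is `0` at the origin and `cᵢ - c_j` at `e_i - e_j`, support amounts
to `a ≤ 0` and (b), and the face is `Q_H` as soon as (c) holds and the origin is off the
hyperplane.
Conversely, `0 ∉ Q_H` since the potential `i ↦ i` decreases along the edges of the DAG (so
`a ≠ 0`), and each `e_i - e_j` is a vertex, lying in `Q_H` only if `(i, j) ∈ E(H)`. -/

open Matrix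

section Face

variable {𝕜 E : Type*} [Field 𝕜] [LinearOrder 𝕜] [IsStrictOrderedRing 𝕜]
  [AddCommGroup E] [Module 𝕜 E]

theorem sep_convexHull_eq_convexHull_sep {s : Set E} {L : E →ₗ[𝕜] 𝕜} {a : 𝕜}
    (hs : ∀ y ∈ s, a ≤ L y) :
    {x ∈ convexHull 𝕜 s | L x = a} = convexHull 𝕜 {y ∈ s | L y = a} := by
  refine Set.Subset.antisymm ?_ fun x hx =>
    ⟨convexHull_mono (Set.sep_subset _ _) hx,
      convexHull_min (fun y hy => hy.2) (convex_hyperplane L.isLinear a) hx⟩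
  rintro _ ⟨hx, hLx⟩
  classical
  rw [convexHull_eq] at hx
  obtain ⟨ι, t, w, z, hw₀, hw₁, hz, rfl⟩ := hx
  -- a vanishing sum of nonnegative terms: points of positive weight lie on the hyperplane
  have hexcess : ∑ i ∈ t, w i * (L (z i) - a) = 0 := by
    simp only [mul_sub, Finset.sum_sub_distrib, ← Finset.sum_mul, hw₁, one_mul, sub_eq_zero]
    rw [← hLx, Finset.centerMass_eq_of_sum_1 _ _ hw₁, map_sum]
    simp only [map_smul, smul_eq_mul]
  have hon : ∀ i ∈ t, w i ≠ 0 → L (z i) = a := fun i hi hwi => by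
    have := (Finset.sum_eq_zero_iff_of_nonneg fun j hj =>
      mul_nonneg (hw₀ j hj) (sub_nonneg.2 (hs _ (hz j hj)))).1 hexcess i hi
    linarith [(mul_eq_zero.1 this).resolve_left hwi]
  rw [← Finset.centerMass_filter_ne_zero]
  refine Finset.centerMass_mem_convexHull _ (fun i hi => hw₀ i (Finset.filter_subset _ _ hi))
    (by rw [Finset.sum_filter_ne_zero, hw₁]; exact one_pos) fun i hi => ?_
  rw [Finset.mem_filter] at hi
  exact ⟨hz i hi.1, hon i hi.1 hi.2⟩

end Face

section RootPolytope

variable {n : ℕ}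

@[simp]
theorem dotProduct_vecOf (c : Fin n → ℝ) (e : Fin n × Fin n) :
    c ⬝ᵥ vecOf n e = c e.1 - c e.2 := by
  simp [dotProduct, vecOf, mul_sub, Finset.sum_sub_distrib]

theorem vecOf_dotProduct_vecOf_le_one {e e' : Fin n × Fin n} (he : e.1 ≠ e.2) (hne : e' ≠ e) :
    vecOf n e ⬝ᵥ vecOf n e' ≤ 1 := by
  obtain ⟨i, j⟩ := e
  obtain ⟨i', j'⟩ := e'
  simp only [dotProduct_vecOf, vecOf, ne_eq, Prod.mk.injEq] at he hne ⊢
  split_ifs <;> grind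

/-- The functional `x ↦ x i - x j` is `2` at `e_i - e_j` and at most `1` at every other edge
vector. -/
theorem mem_of_vecOf_mem_convexHull {F : Set (Fin n × Fin n)} {e : Fin n × Fin n}
    (he : e.1 ≠ e.2) (hmem : vecOf n e ∈ convexHull ℝ (vecOf n '' F)) : e ∈ F := by
  by_contra heF
  have hsub : convexHull ℝ (vecOf n '' F) ⊆ {x | vecOf n e ⬝ᵥ x ≤ 1} := by
    refine convexHull_min ?_ (convex_halfSpace_le (dotProductBilin ℝ ℝ (vecOf n e)).isLinear 1)
    rintro _ ⟨e', he', rfl⟩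
    exact vecOf_dotProduct_vecOf_le_one he (ne_of_mem_of_not_mem he' heF)
  have := hsub hmem
  norm_num [vecOf, he, he.symm] at this

/-- The potential `i ↦ i` is negative on every edge vector of a DAG. -/
theorem zero_notMem_Qp {F : Set (Fin n × Fin n)} (hF : ∀ e ∈ F, e.1 < e.2) :
    (0 : Fin n → ℝ) ∉ Qp n F := by
  intro h0
  have hsub : Qp n F ⊆ {x | (fun i : Fin n => (i : ℝ)) ⬝ᵥ x < 0} := by
    refine convexHull_min ?_ (convex_halfSpace_lt (dotProductBilin ℝ ℝ _).isLinear 0)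
    rintro _ ⟨e, he, rfl⟩
    simpa using hF e he
  simpa using hsub h0

end RootPolytope

/-- The hyperplane `{x : ∑ cᵢxᵢ = a}` is a supporting hyperplane of `tilde Q_G` cutting out
the face `Q_H` (not containing the origin) iff (a) `a < 0`, (b) `cᵢ ≥ c_j + a` for all edges
`(i,j)` of `G`, and (c) for edges `(i,j)` of `G`, `cᵢ = c_j + a` iff `(i,j)` is an edge of `H`. -/
theorem stmt5 (n : ℕ) (E EH : Set (Fin n × Fin n))
    (hE : ∀ e ∈ E, e.1 < e.2) (hH : EH ⊆ E)
    (c : Fin n → ℝ) (a : ℝ) :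
    ((∀ x ∈ tQ n E, a ≤ ∑ i, c i * x i) ∧
      {x ∈ tQ n E | ∑ i, c i * x i = a} = Qp n EH)
    ↔ (a < 0 ∧ (∀ e ∈ E, c e.2 + a ≤ c e.1) ∧
        (∀ e ∈ E, c e.1 = c e.2 + a ↔ e ∈ EH)) := by
  set L : (Fin n → ℝ) →ₗ[ℝ] ℝ := dotProductBilin ℝ ℝ c
  have hLv (e : Fin n × Fin n) : L (vecOf n e) = c e.1 - c e.2 := dotProduct_vecOf c e
  have h0 : (0 : Fin n → ℝ) ∈ tQ n E := subset_convexHull ℝ _ (Or.inl rfl)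
  have hv (e) (he : e ∈ E) : vecOf n e ∈ tQ n E :=
    subset_convexHull ℝ _ (Or.inr ⟨e, he, rfl⟩)
  change ((∀ x ∈ tQ n E, a ≤ L x) ∧ {x ∈ tQ n E | L x = a} = Qp n EH) ↔ _
  constructor
  · rintro ⟨hsupp, hface⟩
    have ha : a < 0 := (by simpa using hsupp 0 h0 : a ≤ 0).lt_of_ne fun ha =>
      zero_notMem_Qp (fun e he => hE e (hH he)) (hface ▸ ⟨h0, by simp [ha]⟩)
    refine ⟨ha, fun e he => by linarith [hsupp _ (hv e he), hLv e], fun e he => ?_⟩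
    have hmem_face : vecOf n e ∈ Qp n EH ↔ c e.1 = c e.2 + a := by
      rw [← hface, Set.mem_sep_iff, hLv]
      exact ⟨fun h => by linarith [h.2], fun h => ⟨hv e he, by linarith⟩⟩
    rw [← hmem_face]
    exact ⟨mem_of_vecOf_mem_convexHull (hE e he).ne,
      fun h => subset_convexHull ℝ _ ⟨e, h, rfl⟩⟩
  · rintro ⟨ha, hb, hc⟩
    have hs : ∀ y ∈ {0} ∪ vecOf n '' E, a ≤ L y := by
      rintro _ (rfl | ⟨e, he, rfl⟩)
      · simpa using ha.le
      · linarith [hb e he, hLv e]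
    have hvert : {y ∈ {0} ∪ vecOf n '' E | L y = a} = vecOf n '' EH := by
      ext y
      simp only [Set.mem_ofPred_eq, Set.mem_union, Set.mem_singleton_iff, Set.mem_image]
      constructor
      · rintro ⟨rfl | ⟨e, he, rfl⟩, hy⟩
        · exact absurd (map_zero L ▸ hy) ha.ne'
        · exact ⟨e, (hc e he).1 (by linarith [hLv e]), rfl⟩
      · rintro ⟨e, he, rfl⟩
        exact ⟨Or.inr ⟨e, hH he, rfl⟩, by linarith [hLv e, (hc e (hH he)).2 he]⟩
    exact ⟨fun x hx => convexHull_min hs (convex_halfSpace_ge L.isLinear a) hx,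
      (sep_convexHull_eq_convexHull_sep hs).trans (congrArg _ hvert)⟩
end

section
/- Let $H \subseteq G$ be a subgraph of a directed acyclic graph $G$ on $[n]$. The multigraph $H_{comp}$ is loopless if and only if $H$ is the disjoint union of induced subgraphs of $G$: there is a partition $\mathcal P$ of $[n]$ such that $E(H) = \{(i,j) \in E(G) : i, j \text{ lie in the same part of } \mathcal P\}$. -/
/-! `SameComp E` is the equivalence relation generated by the edges of `E`, so it is the finest
partition whose parts contain every edge of `E`. If `H_comp` is loopless, this partition for
`E(H)` cuts out exactly `E(H)`; conversely, any partition cutting out `E(H)` is coarser than it,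
so every edge of `G` joining a component of `H` lies in `H`. -/

/-- Undirected adjacency underlying the subgraph `H`. -/
def UAdj {n : ℕ} (E : Set (Fin n × Fin n)) (u v : Fin n) : Prop :=
  (u, v) ∈ E ∨ (v, u) ∈ E

/-- `u` and `v` lie in the same connected component of the underlying undirected graph. -/
def SameComp {n : ℕ} (E : Set (Fin n × Fin n)) : Fin n → Fin n → Prop :=
  Relation.ReflTransGen (UAdj E)

section SameComp

variable {n : ℕ}

theorem sameComp_eq_eqvGen (E : Set (Fin n × Fin n)) :
    SameComp E = Relation.EqvGen fun u v => (u, v) ∈ E :=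
  Relation.EqvGen.reflTransGen_symmGen _

theorem equivalence_sameComp (E : Set (Fin n × Fin n)) : Equivalence (SameComp E) :=
  sameComp_eq_eqvGen E ▸ Relation.EqvGen.is_equivalence _

theorem SameComp.of_mem {E : Set (Fin n × Fin n)} {u v : Fin n} (h : (u, v) ∈ E) :
    SameComp E u v :=
  .single (Or.inl h)

theorem Equivalence.sameComp_le {E : Set (Fin n × Fin n)} {r : Fin n → Fin n → Prop}
    (hr : Equivalence r) (hE : ∀ e ∈ E, r e.1 e.2) : SameComp E ≤ r := by
  rw [sameComp_eq_eqvGen, ← hr.eqvGen_eq]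
  exact Relation.EqvGen.mono fun u v huv => hE (u, v) huv

end SameComp

theorem stmt7_general (n : ℕ) (E EH : Set (Fin n × Fin n))
    (hH : EH ⊆ E) :
    (∀ e ∈ E, SameComp EH e.1 e.2 → e ∈ EH) ↔
      ∃ r : Fin n → Fin n → Prop, Equivalence r ∧ EH = {e ∈ E | r e.1 e.2} := by
  constructor
  · intro hclosed
    refine ⟨SameComp EH, equivalence_sameComp EH, ?_⟩
    ext e
    exact ⟨fun he => ⟨hH he, .of_mem he⟩, fun ⟨heE, hsame⟩ => hclosed e heE hsame⟩
  · rintro ⟨r, hr, rfl⟩ e heE hsame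
    exact ⟨heE, hr.sameComp_le (fun _ he => he.2) _ _ hsame⟩

/-- `H_comp` is loopless iff `H` is a disjoint union of induced subgraphs of `G`, i.e. there
is a partition (equivalence relation) of the vertices with `E(H)` the edges of `G` inside parts. -/
theorem stmt7 (n : ℕ) (E EH : Set (Fin n × Fin n))
    (hE : ∀ e ∈ E, e.1 < e.2) (hH : EH ⊆ E) :
    (∀ e ∈ E, SameComp EH e.1 e.2 → e ∈ EH) ↔
      ∃ r : Fin n → Fin n → Prop, Equivalence r ∧ EH = {e ∈ E | r e.1 e.2} :=
  stmt7_general n E EH hH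
end

section
/- Every alternating directed graph $G$ is path consistent: for any two vertices $i,j$ and any undirected path $p$ in $G^{un}$ from $i$ to $j$, the quantity (number of edges of $p$ traversed in their direction) minus (number of edges of $p$ traversed against their direction) depends only on $i$ and $j$, not on the path $p$. -/
/-- `WalkVal E i j k` : there is an undirected walk in (the underlying undirected graph of)
`E` from `i` to `j` whose number of forward-traversed edges minus number of
backward-traversed edges equals `k`. -/
inductive WalkVal {n : ℕ} (E : Set (Fin n × Fin n)) : Fin n → Fin n → ℤ → Prop
  | nil (v : Fin n) : WalkVal E v v 0
  | fwd {u v w : Fin n} {k : ℤ} : WalkVal E u v k → (v, w) ∈ E → WalkVal E u w (k + 1)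
  | bwd {u v w : Fin n} {k : ℤ} : WalkVal E u v k → (w, v) ∈ E → WalkVal E u w (k - 1)

open Classical in
theorem walkVal_eq_phi {n : ℕ} (E : Set (Fin n × Fin n))
    (halt : ∀ i j k : Fin n, (i, j) ∈ E → (j, k) ∈ E → False) :
    ∀ {i j : Fin n} {k : ℤ}, WalkVal E i j k →
      k = (if ∃ u, (u, j) ∈ E then (1:ℤ) else 0) - (if ∃ u, (u, i) ∈ E then (1:ℤ) else 0) := by
  intro i j k h
  induction h with
  | nil => simp
  | fwd hw he ih =>
    rename_i v w k
    have hv : ¬ ∃ x, (x, v) ∈ E := fun ⟨x, hx⟩ => halt x v w hx he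
    have hw' : ∃ x, (x, w) ∈ E := ⟨v, he⟩
    rw [ih]; simp [hv, hw']; ring
  | bwd hw he ih =>
    rename_i v w k
    have hv : ∃ x, (x, v) ∈ E := ⟨w, he⟩
    have hw' : ¬ ∃ x, (x, w) ∈ E := fun ⟨x, hx⟩ => halt x w v hx he
    rw [ih]; simp [hv, hw']

/-- Every alternating directed graph is path consistent: the forward-minus-backward count
along an undirected walk depends only on the endpoints. -/
theorem stmt8 (n : ℕ) (E : Set (Fin n × Fin n))
    (halt : ∀ i j k : Fin n, (i, j) ∈ E → (j, k) ∈ E → False) :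
    ∀ (i j : Fin n) (k₁ k₂ : ℤ), WalkVal E i j k₁ → WalkVal E i j k₂ → k₁ = k₂ := by
  intro i j k₁ k₂ h₁ h₂
  rw [walkVal_eq_phi E halt h₁, walkVal_eq_phi E halt h₂]
end

section
/- Let $H$ be a path consistent directed acyclic graph with $H^{un}$ connected, and let $u_*$ be a weight source with weight function $w_{u_*}(i) = \ell_{u_* i}$. Then: (1) $w_{u_*}(i) + 1 = w_{u_*}(j)$ for every edge $(i,j) \in E(H)$; (2) $w_{u_*}(i) \geq 0$ for all vertices $i$, with equality if and only if $i$ is a weight source; (3) if $u_*'$ is another weight source then $w_{u_*} = w_{u_*'}$. -/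
lemma WalkVal.trans {n : ℕ} {E : Set (Fin n × Fin n)} {u v w : Fin n} {k k' : ℤ}
    (h₁ : WalkVal E u v k) (h₂ : WalkVal E v w k') : WalkVal E u w (k + k') := by
  induction h₂ with
  | nil => simpa using h₁
  | fwd h e ih => exact (add_assoc k _ 1) ▸ (ih.fwd e)
  | bwd h e ih => exact (add_sub_assoc k _ 1).symm ▸ (ih.bwd e)

/-- Properties of the weight function of a connected path consistent graph:
`L u v` is the (well-defined) forward-minus-backward count from `u` to `v`, and a weight
source is a vertex `u*` at which `max_{u,v} L u v` is attained in the first argument. -/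
theorem stmt10 (n : ℕ) (E : Set (Fin n × Fin n))
    (hE : ∀ e ∈ E, e.1 < e.2)
    (hpc : ∀ (i j : Fin n) (k₁ k₂ : ℤ), WalkVal E i j k₁ → WalkVal E i j k₂ → k₁ = k₂)
    (hconn : ∀ u v : Fin n, ∃ k : ℤ, WalkVal E u v k)
    (L : Fin n → Fin n → ℤ) (hL : ∀ u v, WalkVal E u v (L u v))
    (ustar : Fin n) (hustar : ∃ vstar, ∀ u v, L u v ≤ L ustar vstar) :
    (∀ e ∈ E, L ustar e.1 + 1 = L ustar e.2) ∧
    (∀ i : Fin n, 0 ≤ L ustar i ∧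
      (L ustar i = 0 ↔ ∃ v, ∀ u v', L u v' ≤ L i v)) ∧
    (∀ ustar' : Fin n, (∃ vstar', ∀ u v, L u v ≤ L ustar' vstar') →
      ∀ i, L ustar i = L ustar' i) := by
  obtain ⟨vstar, hv⟩ := hustar
  -- additivity
  have hadd : ∀ u v w, L u w = L u v + L v w := fun u v w =>
    hpc u w _ _ (hL u w) ((hL u v).trans (hL v w))
  have hzero : ∀ u, L u u = 0 := fun u => hpc u u _ _ (hL u u) (WalkVal.nil u)
  have hsymm : ∀ u v, L u v = -L v u := by
    intro u v
    have := hadd u v u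
    rw [hzero] at this
    linarith
  -- nonneg at any source
  have hnn : ∀ (a b : Fin n), (∀ u v', L u v' ≤ L a b) → ∀ i, 0 ≤ L a i := by
    intro a b hab i
    have h1 : L i b ≤ L a b := hab i b
    have h2 : L i b = L i a + L a b := hadd i a b
    have h3 : L i a ≤ 0 := by linarith
    rw [hsymm i a] at h3; linarith
  refine ⟨?_, ?_, ?_⟩
  · intro e he
    have h1 : WalkVal E e.1 e.2 (0 + 1) := (WalkVal.nil e.1).fwd he
    have h2 : L e.1 e.2 = 1 := hpc _ _ _ _ (hL e.1 e.2) h1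
    have := hadd ustar e.1 e.2
    rw [h2] at this
    linarith
  · intro i
    refine ⟨hnn ustar vstar hv i, ?_, ?_⟩
    · intro h0
      refine ⟨vstar, fun u v' => ?_⟩
      have : L i vstar = L i ustar + L ustar vstar := hadd i ustar vstar
      rw [hsymm i ustar, h0] at this
      calc L u v' ≤ L ustar vstar := hv u v'
        _ = L i vstar := by linarith
    · rintro ⟨v, hiv⟩
      have h1 : 0 ≤ L ustar i := hnn ustar vstar hv i
      have h2 : 0 ≤ L i ustar := hnn i v hiv ustar
      rw [hsymm i ustar] at h2
      linarith
  · rintro ustar' ⟨vstar', hv'⟩ i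
    have h1 : 0 ≤ L ustar ustar' := hnn ustar vstar hv ustar'
    have h2 : 0 ≤ L ustar' ustar := hnn ustar' vstar' hv' ustar
    rw [hsymm ustar' ustar] at h2
    have h0 : L ustar ustar' = 0 := le_antisymm (by linarith) h1
    have := hadd ustar ustar' i
    rw [h0] at this
    linarith
end

section
/- Let $G$ be a directed multigraph. A formal $\mathbb Z$-linear combination $\mathcal S$ of edges of $G$ is a $\mathbb Z$-linear combination of simple directed cycles of $G$ if and only if: (1) at every vertex $v$, the sum of coefficients of edges with source $v$ equals the sum of coefficients of edges with target $v$, and (2) every edge in the support of $\mathcal S$ lies on some simple directed cycle of $G$. -/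
/-!
A cycle vector is a circulation supported on edges of cycles, and both properties survive
`ℤ`-linear combinations. Conversely, following edges of positive weight in a nonnegative
circulation must close up a simple cycle, and subtracting it lowers the total weight, so
nonnegative circulations are sums of cycles. A circulation `S` supported on cycle edges is made
nonnegative by adding `M • T`, where `T` is a sum of one cycle through each cycle edge and
`M = ∑ |S e|`; then `S = (S + M • T) - M • T`.
-/

open Classical in
/-- `c : Fin (k+1) → ε` is a simple directed cycle in the multigraph with source and target
maps `s, t`: consecutive edges are concatenable (cyclically) and the visited vertices (the
sources of the edges) are pairwise distinct. -/
def IsCycleFun {V ε : Type*} (s t : ε → V) (k : ℕ) (c : Fin (k + 1) → ε) : Prop :=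
  Function.Injective c ∧ (∀ i : Fin (k + 1), t (c i) = s (c (i + 1))) ∧
    Function.Injective fun i => s (c i)

open Classical in
/-- The characteristic vector (in `ℤ^{E(G)}`) of a simple directed cycle, viewing the cycle
as the formal sum of its edges. -/
noncomputable def cycChi {ε : Type*} {k : ℕ} (c : Fin (k + 1) → ε) : ε → ℤ :=
  fun e => if ∃ i, c i = e then 1 else 0

section

open Finset
open scoped Classical

variable {V ε : Type*}

section

variable {s t : ε → V}

theorem cycChi_nonneg {k : ℕ} (c : Fin (k + 1) → ε) : 0 ≤ cycChi c := fun e => by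
  unfold cycChi; split <;> simp

theorem cycChi_apply_self {k : ℕ} (c : Fin (k + 1) → ε) (i : Fin (k + 1)) : cycChi c (c i) = 1 :=
  if_pos ⟨i, rfl⟩

theorem cycChi_ne_zero {k : ℕ} {c : Fin (k + 1) → ε} {e : ε} : cycChi c e ≠ 0 ↔ ∃ i, c i = e := by
  unfold cycChi; split <;> simp_all

/-- Cut the walk at the first time it revisits a vertex. -/
theorem exists_isCycleFun_of_walk [Finite V] (f : ℕ → ε) (hf : ∀ n, s (f (n + 1)) = t (f n)) :
    ∃ i k, IsCycleFun s t k fun m : Fin (k + 1) => f (i + m) := by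
  have hrep : ∃ j, ∃ i < j, s (f i) = s (f j) := by
    obtain ⟨a, b, hab, h⟩ := Finite.exists_ne_map_eq_of_infinite (s ∘ f)
    rcases hab.lt_or_gt with h' | h'
    · exact ⟨b, a, h', h⟩
    · exact ⟨a, b, h', h.symm⟩
  obtain ⟨i, hij, hi⟩ := Nat.find_spec hrep
  obtain ⟨k, hk⟩ : ∃ k, Nat.find hrep = i + k + 1 := ⟨Nat.find hrep - i - 1, by omega⟩
  have hsrc : Function.Injective fun m : Fin (k + 1) => s (f (i + m)) := by
    have hlt : ∀ a b : Fin (k + 1), a < b → s (f (i + a)) ≠ s (f (i + b)) := fun a b hab heq =>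
      Nat.find_min hrep (m := i + b) (by omega) ⟨i + a, by omega, heq⟩
    intro a b heq
    by_contra hne
    rcases lt_or_gt_of_ne hne with h | h
    exacts [hlt a b h heq, hlt b a h heq.symm]
  refine ⟨i, k, hsrc.of_comp, fun m => ?_, hsrc⟩
  dsimp only
  rw [← hf, Fin.val_add_one]
  split_ifs with hm
  · simp [hm, hi, ← hk]
  · rfl

theorem exists_isCycleFun_of_forall_exists_succ [Finite V] (P : ε → Prop)
    (hsucc : ∀ e, P e → ∃ e', P e' ∧ s e' = t e) {e₀ : ε} (he₀ : P e₀) :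
    ∃ k c, IsCycleFun s t k c ∧ ∀ i, P (c i) := by
  choose g hg hgs using hsucc
  let next : {e // P e} → {e // P e} := fun e => ⟨g e.1 e.2, hg e.1 e.2⟩
  let f : ℕ → ε := fun n => (next^[n] ⟨e₀, he₀⟩).1
  have hf : ∀ n, s (f (n + 1)) = t (f n) := fun n => by
    simp only [f, Function.iterate_succ_apply']
    exact hgs _ _
  obtain ⟨i, k, hc⟩ := exists_isCycleFun_of_walk f hf
  exact ⟨k, _, hc, fun m => (next^[i + m] ⟨e₀, he₀⟩).2⟩

end

variable (s t : ε → V)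

def IsOnCycle (e : ε) : Prop :=
  ∃ k c, IsCycleFun s t k c ∧ ∃ i, c i = e

def cycleVectors : Set (ε → ℤ) :=
  {x | ∃ k c, IsCycleFun s t k c ∧ x = cycChi c}

variable [Fintype ε]

def circulations : AddSubgroup (ε → ℤ) where
  carrier := {S | ∀ v, ∑ e ∈ univ.filter (fun e => s e = v), S e =
    ∑ e ∈ univ.filter (fun e => t e = v), S e}
  zero_mem' := by simp
  add_mem' {a b} ha hb v := by simp only [Pi.add_apply, sum_add_distrib, ha v, hb v]
  neg_mem' {a} ha v := by simp only [Pi.neg_apply, sum_neg_distrib, ha v]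

def cycleSupported : AddSubgroup (ε → ℤ) where
  carrier := {S | ∀ e, S e ≠ 0 → IsOnCycle s t e}
  zero_mem' e h := (h rfl).elim
  add_mem' {a b} ha hb e h := by
    by_cases hae : a e = 0
    · exact hb e (by simpa [hae] using h)
    · exact ha e hae
  neg_mem' {a} ha e h := ha e (neg_ne_zero.1 h)

variable {s t} {S : ε → ℤ}

theorem sum_filter_cycChi {k : ℕ} {c : Fin (k + 1) → ε} (hc : Function.Injective c)
    (p : ε → Prop) :
    ∑ e ∈ univ.filter p, cycChi c e = ∑ i, if p (c i) then 1 else 0 := by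
  have hχ : ∀ e, cycChi c e = ∑ i, if c i = e then 1 else 0 := fun e => by
    by_cases h : ∃ j, c j = e
    · obtain ⟨j, rfl⟩ := h
      simp [cycChi_apply_self, hc.eq_iff]
    · simp [cycChi, not_exists.mp h]
  simp_rw [hχ]
  rw [sum_comm]
  simp

theorem IsCycleFun.cycChi_mem_circulations {k : ℕ} {c : Fin (k + 1) → ε}
    (hc : IsCycleFun s t k c) : cycChi c ∈ circulations s t := fun v => by
  rw [sum_filter_cycChi hc.1, sum_filter_cycChi hc.1]
  simp_rw [hc.2.1]
  exact (Equiv.sum_comp (Equiv.addRight (1 : Fin (k + 1)))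
    fun i => if s (c i) = v then 1 else 0).symm

theorem closure_cycleVectors_le :
    AddSubgroup.closure (cycleVectors s t) ≤ circulations s t ⊓ cycleSupported s t := by
  rw [AddSubgroup.closure_le]
  rintro _ ⟨k, c, hc, rfl⟩
  exact ⟨hc.cycChi_mem_circulations, fun e he => ⟨k, c, hc, cycChi_ne_zero.1 he⟩⟩

theorem exists_pos_succ_of_nonneg (hS : S ∈ circulations s t) (hnn : 0 ≤ S) {e : ε}
    (he : 0 < S e) : ∃ e', 0 < S e' ∧ s e' = t e := by
  by_contra! h
  have hout : ∑ e' ∈ univ.filter (fun e' => s e' = t e), S e' = 0 :=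
    sum_eq_zero fun e' he' => le_antisymm (not_lt.1 fun hpos => h e' hpos (mem_filter.1 he').2)
      (hnn e')
  have hin : S e ≤ ∑ e' ∈ univ.filter (fun e' => t e' = t e), S e' :=
    single_le_sum (fun e' _ => hnn e') (by simp)
  have := hS (t e)
  omega

theorem mem_closure_cycleVectors_of_nonneg [Finite V] (hS : S ∈ circulations s t) (hnn : 0 ≤ S) :
    S ∈ AddSubgroup.closure (cycleVectors s t) := by
  induction hn : (∑ e, S e).toNat using Nat.strong_induction_on generalizing S with
  | _ n ih =>
  by_cases h0 : S = 0
  · simp [h0]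
  obtain ⟨e, he⟩ : ∃ e, 0 < S e := by
    obtain ⟨e, he⟩ := Function.ne_iff.1 h0
    exact ⟨e, lt_of_le_of_ne (hnn e) (Ne.symm he)⟩
  obtain ⟨k, c, hc, hpos⟩ := exists_isCycleFun_of_forall_exists_succ _
    (fun _ he' => exists_pos_succ_of_nonneg hS hnn he') he
  have hle : cycChi c ≤ S := fun e' => by
    by_cases h : ∃ i, c i = e'
    · obtain ⟨i, rfl⟩ := h
      rw [cycChi_apply_self]
      exact hpos i
    · simpa [cycChi, h] using hnn e'
  have hlen : 1 ≤ ∑ e', cycChi c e' :=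
    (cycChi_apply_self c 0).symm.le.trans
      (single_le_sum (fun e' _ => cycChi_nonneg c e') (mem_univ _))
  have hSe : S e ≤ ∑ e', S e' := single_le_sum (fun e' _ => hnn e') (mem_univ e)
  have hrest : S - cycChi c ∈ AddSubgroup.closure (cycleVectors s t) := by
    refine ih _ ?_ (sub_mem hS hc.cycChi_mem_circulations) (sub_nonneg.2 hle) rfl
    simp only [Pi.sub_apply, sum_sub_distrib]
    omega
  simpa using add_mem hrest (AddSubgroup.subset_closure ⟨k, c, hc, rfl⟩)

theorem exists_mem_closure_cycleVectors_one_le :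
    ∃ T ∈ AddSubgroup.closure (cycleVectors s t), 0 ≤ T ∧ ∀ e, IsOnCycle s t e → 1 ≤ T e := by
  choose k c hc hmem using fun e : {e // IsOnCycle s t e} => e.2
  refine ⟨∑ e, cycChi (c e), sum_mem fun e _ => AddSubgroup.subset_closure ⟨_, _, hc e, rfl⟩,
    fun e' => ?_, fun e' he' => ?_⟩
  · rw [Pi.zero_apply, Finset.sum_apply]
    exact sum_nonneg fun e _ => cycChi_nonneg (c e) e'
  · obtain ⟨i, hi⟩ := hmem ⟨e', he'⟩
    rw [Finset.sum_apply, ← cycChi_apply_self (c ⟨e', he'⟩) i, hi]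
    exact single_le_sum (f := fun e => cycChi (c e) e') (fun e _ => cycChi_nonneg (c e) e')
      (mem_univ _)

theorem mem_closure_cycleVectors_of_mem_circulations [Finite V] (hS : S ∈ circulations s t)
    (hsupp : S ∈ cycleSupported s t) : S ∈ AddSubgroup.closure (cycleVectors s t) := by
  obtain ⟨T, hT, hTnn, hT1⟩ := exists_mem_closure_cycleVectors_one_le (s := s) (t := t)
  set M := ∑ e, |S e|
  have hW : 0 ≤ S + M • T := fun e => by
    have hSM : |S e| ≤ M :=
      single_le_sum (f := fun e => |S e|) (fun _ _ => abs_nonneg _) (mem_univ e)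
    have hM : 0 ≤ M := (abs_nonneg _).trans hSM
    by_cases he : S e = 0
    · simpa [he] using mul_nonneg hM (hTnn e)
    · show 0 ≤ S e + M * T e
      nlinarith [neg_abs_le (S e), hT1 e (hsupp e he)]
  have hTcirc := (AddSubgroup.mem_inf.1 (closure_cycleVectors_le hT)).1
  simpa using sub_mem (mem_closure_cycleVectors_of_nonneg (add_mem hS (zsmul_mem hTcirc M)) hW)
    (zsmul_mem hT M)

end

open Classical in
/-- A formal `ℤ`-linear combination of edges is a `ℤ`-linear combination of simple directed
cycles iff (1) at every vertex the coefficient sums over outgoing and incoming edges agree,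
and (2) every edge in the support lies on some simple directed cycle. -/
theorem stmt12 (V ε : Type*) [Fintype V] [Fintype ε] (s t : ε → V) (S : ε → ℤ) :
    S ∈ AddSubgroup.closure
        {x : ε → ℤ | ∃ (k : ℕ) (c : Fin (k + 1) → ε), IsCycleFun s t k c ∧ x = cycChi c} ↔
      ((∀ v : V, ∑ e ∈ Finset.univ.filter (fun e => s e = v), S e =
          ∑ e ∈ Finset.univ.filter (fun e => t e = v), S e) ∧
        ∀ e : ε, S e ≠ 0 →
          ∃ (k : ℕ) (c : Fin (k + 1) → ε), IsCycleFun s t k c ∧ ∃ i, c i = e) :=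
  ⟨fun h => closure_cycleVectors_le h,
    fun h => mem_closure_cycleVectors_of_mem_circulations h.1 h.2⟩
end

section
/- Let $F$ be a face of codimension $d$ of a polytope $P$. Then $F$ is the intersection of some $d$ facets of $P$. -/
/-- `F` is a face of `P`: cut out by a supporting hyperplane. -/
def IsFace (n : ℕ) (P F : Set (Fin n → ℝ)) : Prop :=
  ∃ (c : Fin n → ℝ) (a : ℝ), (∀ x ∈ P, a ≤ ∑ i, c i * x i) ∧
    F = {x ∈ P | ∑ i, c i * x i = a}

/-- The dimension of (the affine hull of) a subset of `ℝⁿ`. -/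
noncomputable def pdim (n : ℕ) (S : Set (Fin n → ℝ)) : ℕ :=
  Module.finrank ℝ (affineSpan ℝ S).direction

namespace Stmt15
variable {n : ℕ}

/-- The linear functional `x ↦ ∑ i, c i * x i`. -/
def L (c x : Fin n → ℝ) : ℝ := ∑ i, c i * x i

lemma isLinearMap_L (c : Fin n → ℝ) : IsLinearMap ℝ (L c) := by
  constructor
  · intro x y; simp [L, mul_add, Finset.sum_add_distrib]
  · intro t x
    simp only [L, Finset.mul_sum, smul_eq_mul]
    exact Finset.sum_congr rfl fun i _ => by simp [mul_comm, mul_assoc, mul_left_comm]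

lemma L_add_c (c d x : Fin n → ℝ) : L (c + d) x = L c x + L d x := by
  simp [L, add_mul, Finset.sum_add_distrib]

lemma L_smul_c (t : ℝ) (c x : Fin n → ℝ) : L (t • c) x = t * L c x := by
  simp only [L, Finset.mul_sum, Pi.smul_apply, smul_eq_mul]; exact Finset.sum_congr rfl fun i _ => by ring

/-- `L c` as a linear map. -/
noncomputable def Lmap (c : Fin n → ℝ) : (Fin n → ℝ) →ₗ[ℝ] ℝ := (isLinearMap_L c).mk' _

@[simp] lemma Lmap_apply (c x : Fin n → ℝ) : Lmap c x = L c x := rfl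

/-- coefficients of a linear functional -/
noncomputable def coeffs (ℓ : (Fin n → ℝ) →ₗ[ℝ] ℝ) : Fin n → ℝ := fun i => ℓ (Pi.single i 1)

lemma L_coeffs (ℓ : (Fin n → ℝ) →ₗ[ℝ] ℝ) (x : Fin n → ℝ) : L (coeffs ℓ) x = ℓ x := by
  rw [LinearMap.pi_apply_eq_sum_univ ℓ x]
  unfold L coeffs
  refine Finset.sum_congr rfl fun i _ => ?_
  have h : (fun j => if i = j then (1:ℝ) else 0) = Pi.single i 1 := by
    ext j; simp [Pi.single_apply, eq_comm]
  rw [h, smul_eq_mul, mul_comm]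

/-- The affine hyperplane `{x | L c x = a}` as an affine subspace. -/
noncomputable def hyp (c : Fin n → ℝ) (a : ℝ) : AffineSubspace ℝ (Fin n → ℝ) :=
  AffineSubspace.comap (Lmap c).toAffineMap (AffineSubspace.mk' a (⊥ : Submodule ℝ ℝ))

lemma mem_hyp {c : Fin n → ℝ} {a : ℝ} {x : Fin n → ℝ} : x ∈ hyp c a ↔ L c x = a := by
  simp [hyp, AffineSubspace.mem_comap, AffineSubspace.mem_mk', sub_eq_zero]

/-- hull of Vs is contained in halfspace if all vertices are. -/
lemma hull_subset_halfspace {Vs : Finset (Fin n → ℝ)} {c : Fin n → ℝ} {a : ℝ}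
    (h : ∀ v ∈ Vs, a ≤ L c v) :
    convexHull ℝ (↑Vs : Set (Fin n → ℝ)) ⊆ {x | a ≤ L c x} :=
  convexHull_min h (convex_halfSpace_ge (isLinearMap_L c) a)

lemma pdim_mono {S T : Set (Fin n → ℝ)} (h : S ⊆ T) : pdim n S ≤ pdim n T :=
  Submodule.finrank_mono (AffineSubspace.direction_le (affineSpan_mono ℝ h))

/-- If `F ⊆ P`, `F` nonempty and `pdim P ≤ pdim F`, then the affine spans agree. -/
lemma affineSpan_eq_of_pdim_le {F P : Set (Fin n → ℝ)} (hFP : F ⊆ P) (hne : F.Nonempty)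
    (hpd : pdim n P ≤ pdim n F) : affineSpan ℝ F = affineSpan ℝ P := by
  have hle : affineSpan ℝ F ≤ affineSpan ℝ P := affineSpan_mono ℝ hFP
  have hdir : (affineSpan ℝ F).direction = (affineSpan ℝ P).direction :=
    Submodule.eq_of_le_of_finrank_le (AffineSubspace.direction_le hle) hpd
  apply AffineSubspace.ext_of_direction_eq hdir
  obtain ⟨x, hx⟩ := hne
  exact ⟨x, subset_affineSpan ℝ F hx, subset_affineSpan ℝ P (hFP hx)⟩

/-- Z-lemma: a nonempty face with full dimension is the whole polytope. -/
lemma face_eq_self_of_pdim_eq {P : Set (Fin n → ℝ)} {c : Fin n → ℝ} {a : ℝ}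
    (hne : ({x ∈ P | L c x = a}).Nonempty)
    (hpd : pdim n P ≤ pdim n {x ∈ P | L c x = a}) :
    {x ∈ P | L c x = a} = P := by
  set F := {x ∈ P | L c x = a} with hF
  have hFP : F ⊆ P := Set.sep_subset _ _
  have hspan := affineSpan_eq_of_pdim_le hFP hne hpd
  apply Set.eq_of_subset_of_subset hFP
  intro x hx
  refine ⟨hx, ?_⟩
  have h1 : affineSpan ℝ F ≤ hyp c a := by
    rw [affineSpan_le]
    intro y hy
    exact mem_hyp.2 hy.2
  have : x ∈ affineSpan ℝ P := subset_affineSpan ℝ P hx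
  rw [← hspan] at this
  exact mem_hyp.1 (h1 this)

/-- P2: if `F ⊆ K`, `F` nonempty, and `K` contains a point outside `affineSpan F`,
then `pdim F < pdim K`. -/
lemma pdim_lt_of_notMem_span {F K : Set (Fin n → ℝ)} (hFK : F ⊆ K) (x0 : Fin n → ℝ)
    (hx0 : x0 ∈ F) (v : Fin n → ℝ) (hv : v ∈ K) (hvs : v ∉ affineSpan ℝ F) :
    pdim n F < pdim n K := by
  set DF := (affineSpan ℝ F).direction
  set DK := (affineSpan ℝ K).direction
  have hsub : DF ⊔ Submodule.span ℝ {v - x0} ≤ DK := by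
    apply sup_le
    · exact AffineSubspace.direction_le (affineSpan_mono ℝ hFK)
    · rw [Submodule.span_singleton_le_iff_mem]
      have h1 : v ∈ affineSpan ℝ K := subset_affineSpan ℝ K hv
      have h2 : x0 ∈ affineSpan ℝ K := subset_affineSpan ℝ K (hFK hx0)
      exact AffineSubspace.vsub_mem_direction h1 h2
  have hne : v - x0 ∉ DF := by
    intro h
    apply hvs
    have : (v - x0) +ᵥ x0 ∈ affineSpan ℝ F :=
      AffineSubspace.vadd_mem_of_mem_direction h (subset_affineSpan ℝ F hx0)
    simpa using this
  have hlt : DF < DF ⊔ Submodule.span ℝ {v - x0} := by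
    refine lt_of_le_of_ne le_sup_left ?_
    intro h
    apply hne
    rw [h]
    exact le_sup_right (α := Submodule ℝ (Fin n → ℝ)) (Submodule.mem_span_singleton_self _)
  calc pdim n F < Module.finrank ℝ (DF ⊔ Submodule.span ℝ {v - x0} : Submodule ℝ (Fin n → ℝ)) :=
        Submodule.finrank_lt_finrank_of_lt hlt
    _ ≤ pdim n K := Submodule.finrank_mono hsub

/-- Lemma B: a face of a polytope is the hull of the vertices lying on it. -/
lemma face_eq_hull_filter (Vs : Finset (Fin n → ℝ)) (c : Fin n → ℝ) (a : ℝ)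
    (hsupp : ∀ x ∈ convexHull ℝ (↑Vs : Set (Fin n → ℝ)), a ≤ L c x) :
    {x ∈ convexHull ℝ (↑Vs : Set (Fin n → ℝ)) | L c x = a} =
      convexHull ℝ (↑(Vs.filter (fun v => L c v = a)) : Set (Fin n → ℝ)) := by
  apply Set.eq_of_subset_of_subset
  · intro x hx
    obtain ⟨hxP, hxa⟩ := hx
    rw [Finset.convexHull_eq] at hxP
    obtain ⟨w, hw0, hw1, hwx⟩ := hxP
    have hLv : ∀ v ∈ Vs, a ≤ L c v := fun v hv => hsupp v (subset_convexHull ℝ _ hv)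
    have hx_sum : L c x = ∑ v ∈ Vs, w v * L c v := by
      rw [← hwx, Finset.centerMass_eq_of_sum_1 _ _ hw1]
      rw [show L c (∑ v ∈ Vs, w v • id v) = Lmap c (∑ v ∈ Vs, w v • id v) from rfl,
        map_sum]
      simp
    have hzero : ∀ v ∈ Vs, w v * (L c v - a) = 0 := by
      rw [← Finset.sum_eq_zero_iff_of_nonneg]
      · have : ∑ v ∈ Vs, w v * (L c v - a) = (∑ v ∈ Vs, w v * L c v) - a * ∑ v ∈ Vs, w v := by
          rw [Finset.mul_sum, ← Finset.sum_sub_distrib]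
          exact Finset.sum_congr rfl fun v _ => by ring
        rw [this, hw1, ← hx_sum, hxa]; ring
      · intro v hv
        have := hw0 v hv
        have := hLv v hv
        nlinarith
    have hwsup : ∀ v ∈ Vs, w v ≠ 0 → L c v = a := by
      intro v hv hwv
      have h := hzero v hv
      rcases mul_eq_zero.1 h with h' | h'
      · exact absurd h' hwv
      · linarith
    have hxc : x = (Vs.filter (fun v => w v ≠ 0)).centerMass w id := by
      rw [← hwx]
      exact (Finset.centerMass_filter_ne_zero _).symm
    rw [hxc]
    apply Finset.centerMass_mem_convexHull
    · intro v hv; exact hw0 v (Finset.mem_filter.1 hv).1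
    · rw [Finset.sum_filter_ne_zero, hw1]; norm_num
    · intro v hv
      obtain ⟨hv1, hv2⟩ := Finset.mem_filter.1 hv
      simp only [id_eq, Finset.coe_filter, Set.mem_setOf_eq]
      exact ⟨hv1, hwsup v hv1 hv2⟩
  · apply convexHull_min
    · intro v hv
      obtain ⟨hv1, hv2⟩ := Finset.mem_filter.1 (by exact_mod_cast hv)
      exact ⟨subset_convexHull ℝ _ hv1, hv2⟩
    · exact ((convex_convexHull ℝ _).inter (convex_hyperplane (isLinearMap_L c) a))

/-- If a face has strictly smaller dimension, some vertex is strictly outside it. -/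
lemma exists_vertex_gt (Vs : Finset (Fin n → ℝ)) (c : Fin n → ℝ) (a : ℝ)
    (hsupp : ∀ x ∈ convexHull ℝ (↑Vs : Set (Fin n → ℝ)), a ≤ L c x)
    (hpd : pdim n {x ∈ convexHull ℝ (↑Vs : Set (Fin n → ℝ)) | L c x = a} <
      pdim n (convexHull ℝ (↑Vs : Set (Fin n → ℝ)))) :
    ∃ v ∈ Vs, a < L c v := by
  by_contra h
  push_neg at h
  have hall : ∀ v ∈ Vs, L c v = a := by
    intro v hv
    exact le_antisymm (h v hv) (hsupp v (subset_convexHull ℝ _ hv))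
  have : {x ∈ convexHull ℝ (↑Vs : Set (Fin n → ℝ)) | L c x = a} =
      convexHull ℝ (↑Vs : Set (Fin n → ℝ)) := by
    rw [face_eq_hull_filter Vs c a hsupp]
    congr 2
    rw [Finset.filter_true_of_mem hall]
  rw [this] at hpd
  exact lt_irrefl _ hpd

/-- Core construction: given a face `G` (cut out by `(cg, ag)`), an affine functional
`(ch, ah)` nonnegative on `G`, and a vertex strictly outside `G`, there is a face `K`
with `G ∩ K = {x ∈ G | L ch x = ah}` and a vertex of `K` strictly outside `G`. -/
lemma core (Vs : Finset (Fin n → ℝ)) (cg : Fin n → ℝ) (ag : ℝ)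
    (hg : ∀ x ∈ convexHull ℝ (↑Vs : Set (Fin n → ℝ)), ag ≤ L cg x)
    (ch : Fin n → ℝ) (ah : ℝ)
    (hh : ∀ x ∈ convexHull ℝ (↑Vs : Set (Fin n → ℝ)), L cg x = ag → ah ≤ L ch x)
    (hex : ∃ v ∈ Vs, ag < L cg v) :
    ∃ (t : ℝ) (v : Fin n → ℝ),
      (∀ x ∈ convexHull ℝ (↑Vs : Set (Fin n → ℝ)),
        t * ag + ah ≤ L (t • cg + ch) x) ∧
      (∀ x ∈ convexHull ℝ (↑Vs : Set (Fin n → ℝ)), L cg x = ag →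
        (L (t • cg + ch) x = t * ag + ah ↔ L ch x = ah)) ∧
      v ∈ Vs ∧ ag < L cg v ∧ L (t • cg + ch) v = t * ag + ah := by
  classical
  set Vp := Vs.filter (fun v => ag < L cg v) with hVp
  have hVpne : Vp.Nonempty := by
    obtain ⟨v, hv, hv'⟩ := hex
    exact ⟨v, Finset.mem_filter.2 ⟨hv, hv'⟩⟩
  set img := Vp.image (fun v => (ah - L ch v) / (L cg v - ag)) with himg
  have himgne : img.Nonempty := hVpne.image _
  set t := img.max' himgne with ht
  have hL : ∀ x, L (t • cg + ch) x = t * L cg x + L ch x := by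
    intro x; rw [L_add_c, L_smul_c]
  refine ⟨t, ?_⟩
  have hvert : ∀ v ∈ Vs, t * ag + ah ≤ L (t • cg + ch) v := by
    intro v hv
    rw [hL]
    by_cases hvg : ag < L cg v
    · have hmem : (ah - L ch v) / (L cg v - ag) ∈ img :=
        Finset.mem_image_of_mem _ (Finset.mem_filter.2 ⟨hv, hvg⟩)
      have hle : (ah - L ch v) / (L cg v - ag) ≤ t := Finset.le_max' _ _ hmem
      rw [div_le_iff₀ (by linarith)] at hle
      nlinarith
    · have h1 : ag ≤ L cg v := hg v (subset_convexHull ℝ _ hv)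
      have h2 : L cg v = ag := le_antisymm (not_lt.1 hvg) h1
      have h3 : ah ≤ L ch v := hh v (subset_convexHull ℝ _ hv) h2
      rw [h2]; linarith
  obtain ⟨v, hvVp, hvmax⟩ := Finset.mem_image.1 (Finset.max'_mem img himgne)
  obtain ⟨hvVs, hvg⟩ := Finset.mem_filter.1 hvVp
  refine ⟨v, ?_, ?_, hvVs, hvg, ?_⟩
  · intro x hx
    exact hull_subset_halfspace hvert hx
  · intro x hx hxg
    rw [hL, hxg]
    constructor
    · intro h; linarith
    · intro h; rw [h]
  · rw [hL]
    have : t * (L cg v - ag) = ah - L ch v := by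
      rw [ht, ← hvmax, div_mul_cancel₀]
      linarith
    nlinarith

/-- Existence of a linear functional vanishing on `W` and equal to `1` at `y ∉ W`. -/
lemma exists_dual_of_notMem (W : Submodule ℝ (Fin n → ℝ)) (y : Fin n → ℝ) (hy : y ∉ W) :
    ∃ ℓ : (Fin n → ℝ) →ₗ[ℝ] ℝ, (∀ w ∈ W, ℓ w = 0) ∧ ℓ y = 1 := by
  have hy0 : W.mkQ y ≠ 0 := by
    rw [Submodule.mkQ_apply, ne_eq, Submodule.Quotient.mk_eq_zero]
    exact hy
  have : ¬ (∀ φ : Module.Dual ℝ ((Fin n → ℝ) ⧸ W), φ (W.mkQ y) = 0) := by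
    rw [Module.forall_dual_apply_eq_zero_iff]
    exact hy0
  push_neg at this
  obtain ⟨φ, hφ⟩ := this
  refine ⟨(φ (W.mkQ y))⁻¹ • (φ.comp W.mkQ), ?_, ?_⟩
  · intro w hw
    simp only [LinearMap.smul_apply, LinearMap.comp_apply, Submodule.mkQ_apply]
    rw [(Submodule.Quotient.mk_eq_zero W).2 hw]
    simp
  · simp only [LinearMap.smul_apply, LinearMap.comp_apply, smul_eq_mul, Submodule.mkQ_apply]
    exact inv_mul_cancel₀ hφ

/-- Lemma E (enlargement): a nonempty face of codimension at least 2 is contained in a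
strictly larger proper face. -/
lemma enlarge (Vs : Finset (Fin n → ℝ)) (cg : Fin n → ℝ) (ag : ℝ)
    (hg : ∀ x ∈ convexHull ℝ (↑Vs : Set (Fin n → ℝ)), ag ≤ L cg x)
    (hne : ({x ∈ convexHull ℝ (↑Vs : Set (Fin n → ℝ)) | L cg x = ag}).Nonempty)
    (hpd : pdim n {x ∈ convexHull ℝ (↑Vs : Set (Fin n → ℝ)) | L cg x = ag} + 2 ≤
      pdim n (convexHull ℝ (↑Vs : Set (Fin n → ℝ)))) :
    ∃ (c : Fin n → ℝ) (a : ℝ),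
      (∀ x ∈ convexHull ℝ (↑Vs : Set (Fin n → ℝ)), a ≤ L c x) ∧
      {x ∈ convexHull ℝ (↑Vs : Set (Fin n → ℝ)) | L cg x = ag} ⊆
        {x ∈ convexHull ℝ (↑Vs : Set (Fin n → ℝ)) | L c x = a} ∧
      pdim n {x ∈ convexHull ℝ (↑Vs : Set (Fin n → ℝ)) | L cg x = ag} <
        pdim n {x ∈ convexHull ℝ (↑Vs : Set (Fin n → ℝ)) | L c x = a} ∧
      pdim n {x ∈ convexHull ℝ (↑Vs : Set (Fin n → ℝ)) | L c x = a} <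
        pdim n (convexHull ℝ (↑Vs : Set (Fin n → ℝ))) := by
  classical
  set P := convexHull ℝ (↑Vs : Set (Fin n → ℝ)) with hP
  set F := {x ∈ P | L cg x = ag} with hF
  obtain ⟨x0, hx0⟩ := hne
  have hx0P : x0 ∈ P := hx0.1
  have hx0g : L cg x0 = ag := hx0.2
  set DF := (affineSpan ℝ F).direction with hDF
  set DP := (affineSpan ℝ P).direction with hDP
  have hDFP : DF ≤ DP :=
    AffineSubspace.direction_le (affineSpan_mono ℝ (Set.sep_subset _ _))
  have hpdF : pdim n F = Module.finrank ℝ DF := rfl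
  have hpdP : pdim n P = Module.finrank ℝ DP := rfl
  -- pick u1 ∈ DP \ DF
  have hlt1 : DF < DP := by
    refine lt_of_le_of_ne hDFP (fun h => ?_)
    rw [hpdF, hpdP, h] at hpd
    omega
  obtain ⟨u1, hu1P, hu1F⟩ := SetLike.exists_of_lt hlt1
  have hu1ne : u1 ≠ 0 := fun h => hu1F (h ▸ DF.zero_mem)
  set W1 := DF ⊔ Submodule.span ℝ {u1} with hW1
  have hW1rank : Module.finrank ℝ W1 ≤ Module.finrank ℝ DF + 1 := by
    have h0 := Submodule.finrank_sup_add_finrank_inf_eq DF (Submodule.span ℝ {u1})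
    have h1 : Module.finrank ℝ (Submodule.span ℝ {u1} : Submodule ℝ (Fin n → ℝ)) = 1 :=
      finrank_span_singleton hu1ne
    rw [← hW1] at h0
    omega
  have hW1P : W1 ≤ DP := by
    apply sup_le hDFP
    rw [Submodule.span_singleton_le_iff_mem]
    exact hu1P
  have hlt2 : W1 < DP := by
    refine lt_of_le_of_ne hW1P (fun h => ?_)
    rw [h] at hW1rank
    rw [hpdF, hpdP] at hpd
    omega
  obtain ⟨u2, hu2P, hu2W1⟩ := SetLike.exists_of_lt hlt2
  set W2 := DF ⊔ Submodule.span ℝ {u2} with hW2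
  have hu1W2 : u1 ∉ W2 := by
    intro h
    rw [hW2, Submodule.mem_sup] at h
    obtain ⟨y, hy, z, hz, hyz⟩ := h
    obtain ⟨s, rfl⟩ := Submodule.mem_span_singleton.1 hz
    by_cases hs : s = 0
    · rw [hs, zero_smul, add_zero] at hyz
      exact hu1F (hyz ▸ hy)
    · apply hu2W1
      have h2 : u2 = s⁻¹ • (u1 - y) := by
        rw [← hyz, add_sub_cancel_left, smul_smul, inv_mul_cancel₀ hs, one_smul]
      rw [h2, hW1]
      have hu1W1 : u1 ∈ W1 :=
        le_sup_right (α := Submodule ℝ (Fin n → ℝ)) (Submodule.mem_span_singleton_self u1)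
      have hyW1 : y ∈ W1 := le_sup_left (α := Submodule ℝ (Fin n → ℝ)) hy
      exact Submodule.smul_mem _ _ (Submodule.sub_mem _ hu1W1 hyW1)
  obtain ⟨ℓ1, hℓ1W, hℓ1u1⟩ := exists_dual_of_notMem W2 u1 hu1W2
  obtain ⟨ℓ2, hℓ2W, hℓ2u2⟩ := exists_dual_of_notMem W1 u2 hu2W1
  have hℓ1DF : ∀ w ∈ DF, ℓ1 w = 0 := fun w hw =>
    hℓ1W w (le_sup_left (α := Submodule ℝ (Fin n → ℝ)) hw)
  have hℓ2DF : ∀ w ∈ DF, ℓ2 w = 0 := fun w hw =>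
    hℓ2W w (le_sup_left (α := Submodule ℝ (Fin n → ℝ)) hw)
  have hℓ1u2 : ℓ1 u2 = 0 :=
    hℓ1W u2 (le_sup_right (α := Submodule ℝ (Fin n → ℝ)) (Submodule.mem_span_singleton_self u2))
  -- vanishing of ℓ on F-differences
  have hFdiff : ∀ (ℓ : (Fin n → ℝ) →ₗ[ℝ] ℝ), (∀ w ∈ DF, ℓ w = 0) →
      ∀ x ∈ F, ℓ x = ℓ x0 := by
    intro ℓ hℓ x hx
    have hmem : x - x0 ∈ DF := by
      have h1 : x ∈ affineSpan ℝ F := subset_affineSpan ℝ F hx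
      have h2 : x0 ∈ affineSpan ℝ F := subset_affineSpan ℝ F hx0
      exact AffineSubspace.vsub_mem_direction h1 h2
    have := hℓ _ hmem
    rw [map_sub] at this
    linarith
  have hexv : ∃ v ∈ Vs, ag < L cg v := by
    apply exists_vertex_gt Vs cg ag hg
    rw [← hF, ← hP]
    omega
  -- main dichotomy, for each functional vanishing on DF
  have key : ∀ (ℓ : (Fin n → ℝ) →ₗ[ℝ] ℝ), (∀ w ∈ DF, ℓ w = 0) →
      (∃ (c : Fin n → ℝ) (a : ℝ),
        (∀ x ∈ P, a ≤ L c x) ∧ F ⊆ {x ∈ P | L c x = a} ∧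
        pdim n F < pdim n {x ∈ P | L c x = a} ∧
        pdim n {x ∈ P | L c x = a} < pdim n P) ∨
      (∃ t : ℝ, ∀ v ∈ Vs, t * (L cg v - ag) + (ℓ v - ℓ x0) = 0) := by
    intro ℓ hℓ
    have hh : ∀ x ∈ P, L cg x = ag → ℓ x0 ≤ L (coeffs ℓ) x := by
      intro x hx hxg
      rw [L_coeffs, hFdiff ℓ hℓ x ⟨hx, hxg⟩]
    obtain ⟨t, v, hsupp, hiff, hvVs, hvg, hveq⟩ := core Vs cg ag hg (coeffs ℓ) (ℓ x0) hh hexv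
    set c := t • cg + coeffs ℓ with hc
    set a := t * ag + ℓ x0 with ha
    set K := {x ∈ P | L c x = a} with hK
    have hFK : F ⊆ K := by
      intro x hx
      refine ⟨hx.1, ?_⟩
      rw [hiff x hx.1 hx.2, L_coeffs]
      exact hFdiff ℓ hℓ x hx
    have hvP : v ∈ P := subset_convexHull ℝ _ hvVs
    have hvK : v ∈ K := ⟨hvP, hveq⟩
    have hvnot : v ∉ affineSpan ℝ F := by
      intro hmem
      have hle : affineSpan ℝ F ≤ hyp cg ag := by
        rw [affineSpan_le]
        intro y hy
        exact mem_hyp.2 hy.2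
      have := mem_hyp.1 (hle hmem)
      linarith
    have hFltK : pdim n F < pdim n K := pdim_lt_of_notMem_span hFK x0 hx0 v hvK hvnot
    by_cases hKP : pdim n K < pdim n P
    · exact Or.inl ⟨c, a, hsupp, hFK, hFltK, hKP⟩
    · -- K has full dimension, hence K = P: overshoot
      have hKle : pdim n K ≤ pdim n P := pdim_mono (Set.sep_subset _ _)
      have hge : pdim n P ≤ pdim n K := by omega
      have hKeq : K = P := face_eq_self_of_pdim_eq ⟨v, hvK⟩ hge
      refine Or.inr ⟨t, fun w hw => ?_⟩
      have hwK : w ∈ K := hKeq ▸ (subset_convexHull ℝ _ hw : w ∈ P)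
      have hwa : L c w = a := hwK.2
      rw [hc, L_add_c, L_smul_c, L_coeffs] at hwa
      rw [ha] at hwa
      linarith
  rcases key ℓ1 hℓ1DF with h | ⟨t1, hov1⟩
  · exact h
  rcases key ℓ2 hℓ2DF with h | ⟨t2, hov2⟩
  · exact h
  -- both overshoot: contradiction
  exfalso
  set M := Submodule.span ℝ ((fun w => w - x0) '' (↑Vs : Set (Fin n → ℝ))) with hM
  have hDPM : DP ≤ M := by
    have hspan : affineSpan ℝ (↑Vs : Set (Fin n → ℝ)) ≤ AffineSubspace.mk' x0 M := by
      rw [affineSpan_le]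
      intro w hw
      rw [SetLike.mem_coe, AffineSubspace.mem_mk']
      exact Submodule.subset_span ⟨w, hw, rfl⟩
    have : affineSpan ℝ P = affineSpan ℝ (↑Vs : Set (Fin n → ℝ)) := affineSpan_convexHull _
    rw [hDP, this]
    calc (affineSpan ℝ (↑Vs : Set (Fin n → ℝ))).direction
        ≤ (AffineSubspace.mk' x0 M).direction := AffineSubspace.direction_le hspan
      _ = M := AffineSubspace.direction_mk' x0 M
  have hker : ∀ (ℓ : (Fin n → ℝ) →ₗ[ℝ] ℝ) (t : ℝ),
      (∀ v ∈ Vs, t * (L cg v - ag) + (ℓ v - ℓ x0) = 0) →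
      ∀ z ∈ M, ℓ z + t * L cg z = 0 := by
    intro ℓ t hov z hz
    have : M ≤ LinearMap.ker (ℓ + t • Lmap cg) := by
      rw [hM, Submodule.span_le]
      rintro _ ⟨w, hw, rfl⟩
      rw [SetLike.mem_coe, LinearMap.mem_ker]
      simp only [LinearMap.add_apply, LinearMap.smul_apply, smul_eq_mul, map_sub,
        Lmap_apply]
      have := hov w hw
      rw [show L cg x0 = ag from hx0g] at *
      linarith
    have := this hz
    rw [LinearMap.mem_ker] at this
    simpa using this
  have e11 : ℓ1 u1 + t1 * L cg u1 = 0 := hker ℓ1 t1 hov1 u1 (hDPM hu1P)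
  have e12 : ℓ1 u2 + t1 * L cg u2 = 0 := hker ℓ1 t1 hov1 u2 (hDPM hu2P)
  have e22 : ℓ2 u2 + t2 * L cg u2 = 0 := hker ℓ2 t2 hov2 u2 (hDPM hu2P)
  rw [hℓ1u1] at e11
  rw [hℓ1u2] at e12
  rw [hℓ2u2] at e22
  have ht1 : t1 ≠ 0 := by intro h; rw [h] at e11; linarith
  have hLu2 : L cg u2 = 0 := by
    rcases mul_eq_zero.1 (by linarith : t1 * L cg u2 = 0) with h | h
    · exact absurd h ht1
    · exact h
  rw [hLu2] at e22
  linarith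

lemma isFace_iff {P F : Set (Fin n → ℝ)} :
    IsFace n P F ↔ ∃ (c : Fin n → ℝ) (a : ℝ),
      (∀ x ∈ P, a ≤ L c x) ∧ F = {x ∈ P | L c x = a} := Iff.rfl

/-- Lemma A: every nonempty face of positive codimension is contained in a facet. -/
lemma subset_facet : ∀ (k : ℕ) (Vs : Finset (Fin n → ℝ)) (cg : Fin n → ℝ) (ag : ℝ),
    (∀ x ∈ convexHull ℝ (↑Vs : Set (Fin n → ℝ)), ag ≤ L cg x) →
    ({x ∈ convexHull ℝ (↑Vs : Set (Fin n → ℝ)) | L cg x = ag}).Nonempty →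
    pdim n (convexHull ℝ (↑Vs : Set (Fin n → ℝ))) =
      pdim n {x ∈ convexHull ℝ (↑Vs : Set (Fin n → ℝ)) | L cg x = ag} + (k + 1) →
    ∃ (c : Fin n → ℝ) (a : ℝ),
      (∀ x ∈ convexHull ℝ (↑Vs : Set (Fin n → ℝ)), a ≤ L c x) ∧
      {x ∈ convexHull ℝ (↑Vs : Set (Fin n → ℝ)) | L cg x = ag} ⊆
        {x ∈ convexHull ℝ (↑Vs : Set (Fin n → ℝ)) | L c x = a} ∧
      pdim n (convexHull ℝ (↑Vs : Set (Fin n → ℝ))) =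
        pdim n {x ∈ convexHull ℝ (↑Vs : Set (Fin n → ℝ)) | L c x = a} + 1 := by
  intro k
  induction k using Nat.strong_induction_on with
  | _ k IH =>
    intro Vs cg ag hg hne hpd
    rcases Nat.eq_zero_or_pos k with hk | hk
    · subst hk
      exact ⟨cg, ag, hg, subset_rfl, by omega⟩
    · have hpd2 : pdim n {x ∈ convexHull ℝ (↑Vs : Set (Fin n → ℝ)) | L cg x = ag} + 2 ≤
          pdim n (convexHull ℝ (↑Vs : Set (Fin n → ℝ))) := by omega
      obtain ⟨c', a', hsupp', hsub', hlt1', hlt2'⟩ := enlarge Vs cg ag hg hne hpd2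
      set P := convexHull ℝ (↑Vs : Set (Fin n → ℝ))
      set K := {x ∈ P | L c' x = a'}
      have hKne : K.Nonempty := hne.mono hsub'
      set m := pdim n P - pdim n K - 1 with hm
      have hmlt : m < k := by omega
      have hmpd : pdim n P = pdim n K + (m + 1) := by omega
      obtain ⟨c, a, hsupp, hsub, hfacet⟩ := IH m hmlt Vs c' a' hsupp' hKne hmpd
      exact ⟨c, a, hsupp, hsub'.trans hsub, hfacet⟩

/-- Lemma C: a facet `H` of a facet `G` of `P` is `G ∩ K` for some facet `K` of `P`. -/
lemma facet_of_facet (Vs : Finset (Fin n → ℝ)) (cg : Fin n → ℝ) (ag : ℝ)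
    (hg : ∀ x ∈ convexHull ℝ (↑Vs : Set (Fin n → ℝ)), ag ≤ L cg x)
    (hGpd : pdim n (convexHull ℝ (↑Vs : Set (Fin n → ℝ))) =
      pdim n {x ∈ convexHull ℝ (↑Vs : Set (Fin n → ℝ)) | L cg x = ag} + 1)
    (ch : Fin n → ℝ) (ah : ℝ)
    (hh : ∀ x ∈ {x ∈ convexHull ℝ (↑Vs : Set (Fin n → ℝ)) | L cg x = ag}, ah ≤ L ch x)
    (hHne : ({x ∈ {x ∈ convexHull ℝ (↑Vs : Set (Fin n → ℝ)) | L cg x = ag} |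
      L ch x = ah}).Nonempty)
    (hHpd : pdim n {x ∈ convexHull ℝ (↑Vs : Set (Fin n → ℝ)) | L cg x = ag} =
      pdim n {x ∈ {x ∈ convexHull ℝ (↑Vs : Set (Fin n → ℝ)) | L cg x = ag} |
        L ch x = ah} + 1) :
    ∃ (c : Fin n → ℝ) (a : ℝ),
      (∀ x ∈ convexHull ℝ (↑Vs : Set (Fin n → ℝ)), a ≤ L c x) ∧
      pdim n (convexHull ℝ (↑Vs : Set (Fin n → ℝ))) =
        pdim n {x ∈ convexHull ℝ (↑Vs : Set (Fin n → ℝ)) | L c x = a} + 1 ∧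
      {x ∈ convexHull ℝ (↑Vs : Set (Fin n → ℝ)) | L cg x = ag} ∩
        {x ∈ convexHull ℝ (↑Vs : Set (Fin n → ℝ)) | L c x = a} =
      {x ∈ {x ∈ convexHull ℝ (↑Vs : Set (Fin n → ℝ)) | L cg x = ag} | L ch x = ah} := by
  classical
  set P := convexHull ℝ (↑Vs : Set (Fin n → ℝ)) with hP
  set G := {x ∈ P | L cg x = ag} with hG
  set H := {x ∈ G | L ch x = ah} with hH
  have hexv : ∃ v ∈ Vs, ag < L cg v := by
    apply exists_vertex_gt Vs cg ag hg
    rw [← hG, ← hP]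
    omega
  have hh' : ∀ x ∈ P, L cg x = ag → ah ≤ L ch x := fun x hx hxg => hh x ⟨hx, hxg⟩
  obtain ⟨t, v, hsupp, hiff, hvVs, hvg, hveq⟩ := core Vs cg ag hg ch ah hh' hexv
  set c := t • cg + ch with hc
  set a := t * ag + ah with ha
  set K := {x ∈ P | L c x = a} with hK
  have hGK : G ∩ K = H := by
    ext x
    constructor
    · rintro ⟨⟨hxP, hxg⟩, ⟨_, hxc⟩⟩
      exact ⟨⟨hxP, hxg⟩, (hiff x hxP hxg).1 hxc⟩
    · rintro ⟨⟨hxP, hxg⟩, hxh⟩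
      exact ⟨⟨hxP, hxg⟩, hxP, (hiff x hxP hxg).2 hxh⟩
  obtain ⟨x1, hx1⟩ := hHne
  have hHK : H ⊆ K := hGK ▸ Set.inter_subset_right
  have hvP : v ∈ P := subset_convexHull ℝ _ hvVs
  have hvK : v ∈ K := ⟨hvP, hveq⟩
  have hvnot : v ∉ affineSpan ℝ H := by
    intro hmem
    have hle : affineSpan ℝ H ≤ hyp cg ag := by
      rw [affineSpan_le]
      intro y hy
      exact mem_hyp.2 hy.1.2
    have := mem_hyp.1 (hle hmem)
    linarith
  have hHltK : pdim n H < pdim n K := pdim_lt_of_notMem_span hHK x1 hx1 v hvK hvnot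
  have hKltP : pdim n K < pdim n P := by
    by_contra hcon
    have hKle : pdim n K ≤ pdim n P := pdim_mono (Set.sep_subset _ _)
    have hge : pdim n P ≤ pdim n K := by omega
    have hKeq : K = P := face_eq_self_of_pdim_eq ⟨v, hvK⟩ hge
    have hGH : G = H := by
      rw [← hGK, hKeq]
      exact (Set.inter_eq_left.2 (Set.sep_subset _ _)).symm
    rw [hGH] at hHpd
    omega
  refine ⟨c, a, hsupp, by rw [← hK]; omega, hGK⟩

/-- Main auxiliary lemma: induction on the codimension `d`. -/
lemma main : ∀ (d : ℕ) (Vs : Finset (Fin n → ℝ)) (F : Set (Fin n → ℝ)),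
    IsFace n (convexHull ℝ (↑Vs : Set (Fin n → ℝ))) F → F.Nonempty →
    pdim n (convexHull ℝ (↑Vs : Set (Fin n → ℝ))) = pdim n F + d →
    ∃ Fs : Fin d → Set (Fin n → ℝ),
      (∀ i, IsFace n (convexHull ℝ (↑Vs : Set (Fin n → ℝ))) (Fs i) ∧
        pdim n (convexHull ℝ (↑Vs : Set (Fin n → ℝ))) = pdim n (Fs i) + 1) ∧
      F = convexHull ℝ (↑Vs : Set (Fin n → ℝ)) ∩ ⋂ i, Fs i := by
  intro d
  induction d with
  | zero =>
    intro Vs F hF hne hd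
    obtain ⟨cf, af, hfs, hFeq⟩ := isFace_iff.1 hF
    refine ⟨fun i => i.elim0, fun i => i.elim0, ?_⟩
    have hFP : F = convexHull ℝ (↑Vs : Set (Fin n → ℝ)) := by
      rw [hFeq]
      apply face_eq_self_of_pdim_eq
      · rw [← hFeq]; exact hne
      · rw [← hFeq]; omega
    rw [hFP, Set.iInter_of_empty, Set.inter_univ]
  | succ d IH =>
    intro Vs F hF hne hd
    obtain ⟨cf, af, hfs, hFeq⟩ := isFace_iff.1 hF
    set P := convexHull ℝ (↑Vs : Set (Fin n → ℝ)) with hP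
    have hFne' : ({x ∈ P | L cf x = af}).Nonempty := by rw [← hFeq]; exact hne
    have hd' : pdim n P = pdim n {x ∈ P | L cf x = af} + (d + 1) := by rw [← hFeq]; exact hd
    obtain ⟨cg, ag, hg, hsubG, hGpd⟩ := subset_facet d Vs cf af hfs hFne' hd'
    rw [← hP] at hg hsubG hGpd
    set G := {x ∈ P | L cg x = ag} with hG
    have hGP : G ⊆ P := Set.sep_subset _ _
    set Vs' := Vs.filter (fun v => L cg v = ag) with hVs'
    have hGhull : G = convexHull ℝ (↑Vs' : Set (Fin n → ℝ)) := face_eq_hull_filter Vs cg ag hg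
    have hFG : F ⊆ G := by rw [hFeq]; exact hsubG
    have hFfaceG : F = {x ∈ G | L cf x = af} := by
      apply Set.eq_of_subset_of_subset
      · intro x hx
        refine ⟨hFG hx, ?_⟩
        rw [hFeq] at hx
        exact hx.2
      · intro x hx
        rw [hFeq]
        exact ⟨hGP hx.1, hx.2⟩
    have hFfaceG' : IsFace n (convexHull ℝ (↑Vs' : Set (Fin n → ℝ))) F := by
      refine isFace_iff.2 ⟨cf, af, ?_, ?_⟩
      · intro x hx
        exact hfs x (hGP (by rw [hGhull]; exact hx))
      · rw [← hGhull]
        exact hFfaceG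
    have hpdG : pdim n (convexHull ℝ (↑Vs' : Set (Fin n → ℝ))) = pdim n F + d := by
      rw [← hGhull]
      have haux : pdim n F = pdim n {x ∈ P | L cf x = af} := by rw [← hFeq]
      omega
    obtain ⟨Hs, hHs, hFeq2⟩ := IH Vs' F hFfaceG' hne hpdG
    have hFeq2' : F = G ∩ ⋂ i, Hs i := by rw [hFeq2, ← hGhull]
    have hFsubH : ∀ i, F ⊆ Hs i := by
      intro i x hx
      rw [hFeq2'] at hx
      exact Set.mem_iInter.1 hx.2 i
    have hKex : ∀ i : Fin d, ∃ (c : Fin n → ℝ) (a : ℝ),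
        (∀ x ∈ P, a ≤ L c x) ∧ pdim n P = pdim n {x ∈ P | L c x = a} + 1 ∧
        G ∩ {x ∈ P | L c x = a} = Hs i := by
      intro i
      obtain ⟨hface_i, hpd_i⟩ := hHs i
      obtain ⟨ch, ah, hh, hHeq⟩ := isFace_iff.1 hface_i
      have hHeq' : Hs i = {x ∈ G | L ch x = ah} := by rw [hHeq, ← hGhull]
      have hh' : ∀ x ∈ G, ah ≤ L ch x := by
        intro x hx
        exact hh x (by rw [hGhull] at hx; exact hx)
      have hHneI : ({x ∈ G | L ch x = ah}).Nonempty := by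
        rw [← hHeq']
        exact hne.mono (hFsubH i)
      have hHpdI : pdim n G = pdim n {x ∈ G | L ch x = ah} + 1 := by
        rw [← hHeq', hGhull]
        exact hpd_i
      obtain ⟨c, a, h1, h2, h3⟩ := facet_of_facet Vs cg ag hg hGpd ch ah hh' hHneI hHpdI
      exact ⟨c, a, h1, h2, by rw [h3, ← hHeq']⟩
    choose cK aK hKsupp hKpd hKeq using hKex
    refine ⟨Fin.cons G (fun i => {x ∈ P | L (cK i) x = aK i}), ?_, ?_⟩
    · intro i
      refine Fin.cases ?_ (fun j => ?_) i
      · rw [Fin.cons_zero]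
        exact ⟨isFace_iff.2 ⟨cg, ag, hg, rfl⟩, hGpd⟩
      · rw [Fin.cons_succ]
        exact ⟨isFace_iff.2 ⟨cK j, aK j, hKsupp j, rfl⟩, hKpd j⟩
    · have hI : (⋂ i, (Fin.cons G (fun i => {x ∈ P | L (cK i) x = aK i}) :
          Fin (d+1) → Set (Fin n → ℝ)) i) =
          G ∩ ⋂ j, {x ∈ P | L (cK j) x = aK j} := by
        ext x
        simp only [Set.mem_iInter, Set.mem_inter_iff]
        constructor
        · intro h
          exact ⟨by simpa using h 0, fun j => by simpa using h j.succ⟩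
        · intro h i
          refine Fin.cases ?_ (fun j => ?_) i
          · simpa using h.1
          · simpa using h.2 j
      rw [hI]
      ext x
      constructor
      · intro hx
        have hx' := hx
        rw [hFeq2'] at hx'
        refine ⟨hGP hx'.1, hx'.1, Set.mem_iInter.2 fun j => ?_⟩
        have hj := Set.mem_iInter.1 hx'.2 j
        rw [← hKeq j] at hj
        exact hj.2
      · rintro ⟨hxP, hxG, hxK⟩
        rw [hFeq2']
        refine ⟨hxG, Set.mem_iInter.2 fun j => ?_⟩
        rw [← hKeq j]
        exact ⟨hxG, Set.mem_iInter.1 hxK j⟩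

end Stmt15

/-- A (nonempty) face of codimension `d` of a polytope `P` is the intersection of `d`
facets of `P`. -/
theorem stmt15 (n d : ℕ) (Vs : Finset (Fin n → ℝ)) (F : Set (Fin n → ℝ))
    (hF : IsFace n (convexHull ℝ (↑Vs : Set (Fin n → ℝ))) F)
    (hFne : F.Nonempty)
    (hd : pdim n (convexHull ℝ (↑Vs : Set (Fin n → ℝ))) = pdim n F + d) :
    ∃ Fs : Fin d → Set (Fin n → ℝ),
      (∀ i, IsFace n (convexHull ℝ (↑Vs : Set (Fin n → ℝ))) (Fs i) ∧
        pdim n (convexHull ℝ (↑Vs : Set (Fin n → ℝ))) = pdim n (Fs i) + 1) ∧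
      F = convexHull ℝ (↑Vs : Set (Fin n → ℝ)) ∩ ⋂ i, Fs i :=
  Stmt15.main d Vs F hF hFne hd
end
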